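/- arXiv:1811.03520 — 4 statements merged into one kernel-verified Lean document; each statement's English description precedes it below -/
import Mathlib

section
/- Let r : ℕ → (0,1] be non-decreasing with limit 1, R(z) = ∑_{k≥0} z^k/(r(1)⋯r(k)), and Ψ(z) = z R'(z)/R(z) for z ∈ [0,1). Then Ψ is a strictly increasing continuous bijection from [0,1) onto [0,∞). -/
set_option maxHeartbeats 1000000

open Filter Topology

lemma aux_sign (x y : ℝ) (hx : 0 ≤ x) (hxy : x ≤ y) (j k : ℕ) :
    0 ≤ ((j:ℝ) - k) * (y^j * x^k - x^j * y^k) := by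
  have hy : 0 ≤ y := hx.trans hxy
  rcases le_total k j with h | h
  · obtain ⟨d, rfl⟩ := Nat.exists_eq_add_of_le h
    have h1 : y^(k+d) * x^k - x^(k+d) * y^k = (x*y)^k * (y^d - x^d) := by
      rw [pow_add, pow_add, mul_pow]; ring
    have h2 : ((k+d:ℕ):ℝ) - k = d := by push_cast; ring
    rw [h1, h2]
    exact mul_nonneg (Nat.cast_nonneg d) (mul_nonneg (pow_nonneg (mul_nonneg hx hy) k)
      (sub_nonneg.2 (pow_le_pow_left₀ hx hxy d)))
  · obtain ⟨d, rfl⟩ := Nat.exists_eq_add_of_le h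
    have h1 : y^j * x^(j+d) - x^j * y^(j+d) = -((x*y)^j * (y^d - x^d)) := by
      rw [pow_add, pow_add, mul_pow]; ring
    have h2 : ((j:ℝ) - (j+d:ℕ)) = -(d:ℝ) := by push_cast; ring
    rw [h1, h2, neg_mul_neg]
    exact mul_nonneg (Nat.cast_nonneg d) (mul_nonneg (pow_nonneg (mul_nonneg hx hy) j)
      (sub_nonneg.2 (pow_le_pow_left₀ hx hxy d)))

lemma aux_summable (a : ℕ → ℝ) (ha : ∀ k, 0 ≤ a k)
    (hgrow : ∀ c : ℝ, 0 < c → c < 1 → ∃ C, ∀ k, a k * c^k ≤ C)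
    (p : ℕ) {z : ℝ} (hz0 : 0 ≤ z) (hz1 : z < 1) :
    Summable (fun k : ℕ => (k:ℝ)^p * (a k * z^k)) := by
  set c : ℝ := (z+1)/2 with hc
  have hc0 : 0 < c := by positivity
  have hzc : z < c := by rw [hc]; linarith
  have hc1 : c < 1 := by rw [hc]; linarith
  set t : ℝ := z / c with htdef
  have ht0 : 0 ≤ t := div_nonneg hz0 hc0.le
  have ht1 : t < 1 := (div_lt_one hc0).2 hzc
  obtain ⟨C, hC⟩ := hgrow c hc0 hc1
  have hsum : Summable (fun k : ℕ => C * ((k:ℝ)^p * t^k)) :=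
    (summable_pow_mul_geometric_of_norm_lt_one p
      (by rw [Real.norm_eq_abs, abs_of_nonneg ht0]; exact ht1)).mul_left C
  apply Summable.of_nonneg_of_le (fun k => mul_nonneg (pow_nonneg (Nat.cast_nonneg k) p)
    (mul_nonneg (ha k) (pow_nonneg hz0 k))) ?_ hsum
  intro k
  have hzk : z ^ k = c ^ k * t ^ k := by
    rw [← mul_pow, mul_div_cancel₀ z hc0.ne']
  calc (k:ℝ)^p * (a k * z^k) = (k:ℝ)^p * t^k * (a k * c^k) := by rw [hzk]; ring
    _ ≤ (k:ℝ)^p * t^k * C := by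
        apply mul_le_mul_of_nonneg_left (hC k) (by positivity)
    _ = C * ((k:ℝ)^p * t^k) := by ring

lemma aux_hasDerivAt (b : ℕ → ℝ) (hb : ∀ k, 0 ≤ b k)
    (hsum : ∀ (p : ℕ) {z : ℝ}, 0 ≤ z → z < 1 → Summable (fun k : ℕ => (k:ℝ)^p * (b k * z^k)))
    {z : ℝ} (hz0 : 0 ≤ z) (hz1 : z < 1) :
    HasDerivAt (fun y => ∑' k, b k * y ^ k) (∑' k, b k * ((k:ℝ) * z ^ (k-1))) z := by
  set c : ℝ := (z+1)/2 with hc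
  have hc0 : 0 < c := by positivity
  have hzc : z < c := by rw [hc]; linarith
  have hc1 : c < 1 := by rw [hc]; linarith
  have husum : Summable (fun k : ℕ => b k * ((k:ℝ) * c^(k-1))) := by
    apply ((hsum 1 hc0.le hc1).mul_left c⁻¹).congr
    intro k
    cases k with
    | zero => simp
    | succ n =>
      simp only [pow_one, Nat.add_sub_cancel]
      rw [pow_succ]
      field_simp
  apply hasDerivAt_tsum_of_isPreconnected husum (isOpen_Ioo (a := -c) (b := c))
    ((convex_Ioo _ _).isPreconnected)
    (g := fun n y => b n * y ^ n) (g' := fun n y => b n * ((n:ℝ) * y^(n-1)))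
    (fun n y _ => (hasDerivAt_pow n y).const_mul (b n)) ?_
    (y₀ := z) ⟨by linarith, hzc⟩ ?_ ⟨by linarith, hzc⟩
  · intro n y hy
    have hyc : |y| ≤ c := le_of_lt (abs_lt.2 ⟨hy.1, hy.2⟩)
    rw [Real.norm_eq_abs, abs_mul, abs_mul, abs_pow, abs_of_nonneg (hb n), Nat.abs_cast]
    exact mul_le_mul_of_nonneg_left (mul_le_mul_of_nonneg_left
      (pow_le_pow_left₀ (abs_nonneg y) hyc _) (Nat.cast_nonneg n)) (hb n)
  · have := hsum 0 hz0 hz1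
    apply this.congr
    intro k; simp

lemma aux_key (a : ℕ → ℝ) (hapos : ∀ k, 0 < a k) {x y : ℝ}
    (hx0 : 0 ≤ x) (hxy : x < y)
    (hsx : Summable (fun k : ℕ => a k * x^k))
    (hsy : Summable (fun k : ℕ => a k * y^k))
    (hnx : Summable (fun k : ℕ => ((k:ℝ) * a k) * x^k))
    (hny : Summable (fun k : ℕ => ((k:ℝ) * a k) * y^k)) :
    (∑' k : ℕ, ((k:ℝ) * a k) * x^k) * (∑' k : ℕ, a k * y^k)
      < (∑' k : ℕ, ((k:ℝ) * a k) * y^k) * (∑' k : ℕ, a k * x^k) := by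
  have n1 : Summable (fun k : ℕ => ‖a k * x^k‖) := summable_norm_iff.2 hsx
  have n2 : Summable (fun k : ℕ => ‖a k * y^k‖) := summable_norm_iff.2 hsy
  have n3 : Summable (fun k : ℕ => ‖((k:ℝ) * a k) * x^k‖) := summable_norm_iff.2 hnx
  have n4 : Summable (fun k : ℕ => ‖((k:ℝ) * a k) * y^k‖) := summable_norm_iff.2 hny
  set F : ℕ × ℕ → ℝ := fun p =>
    ((p.1:ℝ) * a p.1) * y^p.1 * (a p.2 * x^p.2)
      - ((p.1:ℝ) * a p.1) * x^p.1 * (a p.2 * y^p.2) with hFdef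
  have e1 : (∑' k : ℕ, ((k:ℝ) * a k) * x^k) * (∑' k : ℕ, a k * y^k)
      = ∑' p : ℕ × ℕ, ((p.1:ℝ) * a p.1) * x^p.1 * (a p.2 * y^p.2) :=
    tsum_mul_tsum_of_summable_norm n3 n2
  have e2 : (∑' k : ℕ, ((k:ℝ) * a k) * y^k) * (∑' k : ℕ, a k * x^k)
      = ∑' p : ℕ × ℕ, ((p.1:ℝ) * a p.1) * y^p.1 * (a p.2 * x^p.2) :=
    tsum_mul_tsum_of_summable_norm n4 n1
  have hs1 : Summable (fun p : ℕ × ℕ => ((p.1:ℝ) * a p.1) * y^p.1 * (a p.2 * x^p.2)) :=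
    summable_mul_of_summable_norm (f := fun k : ℕ => ((k:ℝ) * a k) * y^k)
      (g := fun k : ℕ => a k * x^k) n4 n1
  have hs2 : Summable (fun p : ℕ × ℕ => ((p.1:ℝ) * a p.1) * x^p.1 * (a p.2 * y^p.2)) :=
    summable_mul_of_summable_norm (f := fun k : ℕ => ((k:ℝ) * a k) * x^k)
      (g := fun k : ℕ => a k * y^k) n3 n2
  have hFs : Summable F := hs1.sub hs2
  have e3 : (∑' p : ℕ × ℕ, ((p.1:ℝ) * a p.1) * y^p.1 * (a p.2 * x^p.2))
      - (∑' p : ℕ × ℕ, ((p.1:ℝ) * a p.1) * x^p.1 * (a p.2 * y^p.2))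
      = ∑' p : ℕ × ℕ, F p := (Summable.tsum_sub hs1 hs2).symm
  have hFswap : Summable (fun p : ℕ × ℕ => F (Prod.swap p)) :=
    ((Equiv.prodComm ℕ ℕ).summable_iff.2 hFs)
  have hswap : ∑' p : ℕ × ℕ, F (Prod.swap p) = ∑' p, F p :=
    (Equiv.prodComm ℕ ℕ).tsum_eq F
  have h2 : ∑' p : ℕ × ℕ, (F p + F (Prod.swap p)) = (∑' p, F p) + ∑' p, F (Prod.swap p) :=
    Summable.tsum_add hFs hFswap
  have hpos : 0 < ∑' p : ℕ × ℕ, (F p + F (Prod.swap p)) := by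
    apply Summable.tsum_pos (hFs.add hFswap) ?_ ((1 : ℕ), (0 : ℕ))
    · have heq : F ((1:ℕ),(0:ℕ)) + F (Prod.swap ((1:ℕ),(0:ℕ)))
          = (a 1 * a 0) * (y - x) := by
        simp only [hFdef, Prod.swap]; push_cast; ring
      rw [heq]
      exact mul_pos (mul_pos (hapos 1) (hapos 0)) (sub_pos.2 hxy)
    · rintro ⟨j, k⟩
      have heq : F (j,k) + F (Prod.swap (j,k))
          = (a j * a k) * (((j:ℝ) - (k:ℝ)) * (y^j * x^k - x^j * y^k)) := by
        simp only [hFdef, Prod.swap]; ring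
      rw [heq]
      exact mul_nonneg (mul_nonneg (hapos j).le (hapos k).le) (aux_sign x y hx0 hxy.le j k)
  linarith

theorem stmt1 (r : ℕ → ℝ)
    (hr_pos : ∀ k, 1 ≤ k → 0 < r k)
    (hr_le : ∀ k, 1 ≤ k → r k ≤ 1)
    (hr_mono : ∀ k, 1 ≤ k → r k ≤ r (k + 1))
    (hr_lim : Tendsto r atTop (𝓝 1))
    (R R' Ψ : ℝ → ℝ)
    (hR : ∀ z ∈ Set.Ico (0 : ℝ) 1,
      R z = ∑' k : ℕ, z ^ k / ∏ i ∈ Finset.Icc 1 k, r i)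
    (hR' : ∀ z ∈ Set.Ico (0 : ℝ) 1, HasDerivAt R (R' z) z)
    (hΨ : ∀ z ∈ Set.Ico (0 : ℝ) 1, Ψ z = z * R' z / R z) :
    StrictMonoOn Ψ (Set.Ico 0 1) ∧ ContinuousOn Ψ (Set.Ico 0 1) ∧
      Set.BijOn Ψ (Set.Ico 0 1) (Set.Ici 0) := by
  set a : ℕ → ℝ := fun k => (∏ i ∈ Finset.Icc 1 k, r i)⁻¹ with hadef
  have hprodpos : ∀ k, 0 < ∏ i ∈ Finset.Icc 1 k, r i := fun k =>
    Finset.prod_pos fun i hi => hr_pos i (Finset.mem_Icc.1 hi).1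
  have hapos : ∀ k, 0 < a k := fun k => inv_pos.2 (hprodpos k)
  have ha1 : ∀ k, 1 ≤ a k := fun k =>
    (one_le_inv₀ (hprodpos k)).2 (Finset.prod_le_one
      (fun i hi => (hr_pos i (Finset.mem_Icc.1 hi).1).le)
      (fun i hi => hr_le i (Finset.mem_Icc.1 hi).1))
  have ha0 : a 0 = 1 := by simp [hadef]
  have hasucc : ∀ k, a (k+1) = a k * (r (k+1))⁻¹ := by
    intro k
    simp only [hadef]
    rw [Finset.prod_Icc_succ_top (Nat.le_add_left 1 k), mul_inv]
  -- growth bound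
  have hgrow : ∀ c : ℝ, 0 < c → c < 1 → ∃ C, ∀ k, a k * c^k ≤ C := by
    intro c hc0 hc1
    obtain ⟨K, hK⟩ := Filter.eventually_atTop.1 (hr_lim.eventually (eventually_ge_nhds hc1))
    have hdec : ∀ k, K ≤ k → a k * c^k ≤ a K * c^K := by
      intro k hk
      induction k, hk using Nat.le_induction with
      | base => exact le_rfl
      | succ n hn ih =>
        have hrn : c ≤ r (n+1) := hK (n+1) (by omega)
        have hrpos : 0 < r (n+1) := hr_pos (n+1) (by omega)
        have heq : a (n+1) * c^(n+1) = (a n * c^n) * (c / r (n+1)) := by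
          rw [hasucc n, pow_succ, div_eq_mul_inv]; ring
        rw [heq]
        have h1 : c / r (n+1) ≤ 1 := (div_le_one hrpos).2 hrn
        have h2 : 0 ≤ a n * c^n := mul_nonneg (hapos n).le (pow_nonneg hc0.le n)
        calc (a n * c^n) * (c / r (n+1)) ≤ (a n * c^n) * 1 :=
              mul_le_mul_of_nonneg_left h1 h2
          _ = a n * c^n := mul_one _
          _ ≤ a K * c^K := ih
    refine ⟨(∑ j ∈ Finset.range K, a j * c^j) + a K * c^K, fun k => ?_⟩
    have hnn : ∀ j, 0 ≤ a j * c^j := fun j => mul_nonneg (hapos j).le (pow_nonneg hc0.le j)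
    rcases lt_or_ge k K with h | h
    · have h1 : a k * c^k ≤ ∑ j ∈ Finset.range K, a j * c^j :=
        Finset.single_le_sum (fun j _ => hnn j) (Finset.mem_range.2 h)
      linarith [hnn K]
    · have h2 : (0:ℝ) ≤ ∑ j ∈ Finset.range K, a j * c^j :=
        Finset.sum_nonneg fun j _ => hnn j
      linarith [hdec k h]
  -- summability
  have hsum : ∀ (p : ℕ) {z : ℝ}, 0 ≤ z → z < 1 →
      Summable (fun k : ℕ => (k:ℝ)^p * (a k * z^k)) :=
    fun p {z} hz0 hz1 => aux_summable a (fun k => (hapos k).le) hgrow p hz0 hz1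
  have hsD : ∀ {z : ℝ}, 0 ≤ z → z < 1 → Summable (fun k : ℕ => a k * z^k) := by
    intro z hz0 hz1
    exact (hsum 0 hz0 hz1).congr (fun k => by rw [pow_zero, one_mul])
  have hsN : ∀ {z : ℝ}, 0 ≤ z → z < 1 → Summable (fun k : ℕ => ((k:ℝ) * a k) * z^k) := by
    intro z hz0 hz1
    exact (hsum 1 hz0 hz1).congr (fun k => by rw [pow_one]; ring)
  set D : ℝ → ℝ := fun z => ∑' k : ℕ, a k * z^k with hDdef
  set N : ℝ → ℝ := fun z => ∑' k : ℕ, ((k:ℝ) * a k) * z^k with hNdef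
  have hD1 : ∀ {z : ℝ}, 0 ≤ z → z < 1 → 1 ≤ D z := by
    intro z hz0 hz1
    have h1 : a 0 * z^0 ≤ D z :=
      Summable.le_tsum (hsD hz0 hz1) 0 (fun j _ => mul_nonneg (hapos j).le (pow_nonneg hz0 j))
    simpa [ha0] using h1
  have hDpos : ∀ {z : ℝ}, 0 ≤ z → z < 1 → 0 < D z := fun hz0 hz1 =>
    lt_of_lt_of_le one_pos (hD1 hz0 hz1)
  have hNnonneg : ∀ {z : ℝ}, 0 ≤ z → z < 1 → 0 ≤ N z := fun {z} hz0 hz1 =>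
    tsum_nonneg (fun k => mul_nonneg (mul_nonneg (Nat.cast_nonneg k) (hapos k).le)
      (pow_nonneg hz0 k))
  have hRD : ∀ z ∈ Set.Ico (0:ℝ) 1, R z = D z := by
    intro z hz
    rw [hR z hz, hDdef]
    exact tsum_congr fun k => by rw [hadef, div_eq_mul_inv, mul_comm]
  -- derivatives
  have hDderiv : ∀ {z : ℝ}, 0 ≤ z → z < 1 →
      HasDerivAt D (∑' k : ℕ, a k * ((k:ℝ) * z^(k-1))) z := by
    intro z hz0 hz1
    rw [hDdef]
    exact aux_hasDerivAt a (fun k => (hapos k).le) (fun p {w} hw0 hw1 => hsum p hw0 hw1) hz0 hz1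
  have hNderiv : ∀ {z : ℝ}, 0 ≤ z → z < 1 →
      HasDerivAt N (∑' k : ℕ, ((k:ℝ) * a k) * ((k:ℝ) * z^(k-1))) z := by
    intro z hz0 hz1
    rw [hNdef]
    apply aux_hasDerivAt (fun k => (k:ℝ) * a k)
      (fun k => mul_nonneg (Nat.cast_nonneg k) (hapos k).le) ?_ hz0 hz1
    intro p w hw0 hw1
    exact (hsum (p+1) hw0 hw1).congr (fun k => by rw [pow_succ]; ring)
  have hDcont : ContinuousOn D (Set.Ico 0 1) := fun z hz =>
    ((hDderiv hz.1 hz.2).continuousAt).continuousWithinAt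
  have hNcont : ContinuousOn N (Set.Ico 0 1) := fun z hz =>
    ((hNderiv hz.1 hz.2).continuousAt).continuousWithinAt
  -- identify z * R' z with N z
  have hS : ∀ z ∈ Set.Ico (0:ℝ) 1, z * R' z = N z := by
    intro z hz
    obtain ⟨hz0, hz1⟩ := hz
    have hzS : z * (∑' k : ℕ, a k * ((k:ℝ) * z^(k-1))) = N z := by
      rw [hNdef, ← tsum_mul_left]
      refine tsum_congr fun k => ?_
      cases k with
      | zero => simp
      | succ n => rw [Nat.add_sub_cancel, pow_succ]; push_cast; ring
    rcases eq_or_lt_of_le hz0 with h0 | h0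
    · rw [← h0] at hzS ⊢
      rw [zero_mul] at hzS ⊢
      exact hzS
    · have hmem : Set.Ico (0:ℝ) 1 ∈ 𝓝 z := Ico_mem_nhds h0 hz1
      have hDAt : HasDerivAt R (∑' k : ℕ, a k * ((k:ℝ) * z^(k-1))) z :=
        (hDderiv hz0 hz1).congr_of_eventuallyEq
          (Filter.eventually_of_mem hmem fun y hy => hRD y hy)
      rw [(hR' z ⟨hz0, hz1⟩).unique hDAt]
      exact hzS
  have hΨeq : ∀ z ∈ Set.Ico (0:ℝ) 1, Ψ z = N z / D z := by
    intro z hz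
    rw [hΨ z hz, hS z hz, hRD z hz]
  -- strict monotonicity
  have hmono : StrictMonoOn Ψ (Set.Ico 0 1) := by
    intro x hx y hy hxy
    rw [hΨeq x hx, hΨeq y hy, div_lt_div_iff₀ (hDpos hx.1 hx.2) (hDpos hy.1 hy.2)]
    have := aux_key a hapos hx.1 hxy (hsD hx.1 hx.2) (hsD hy.1 hy.2)
      (hsN hx.1 hx.2) (hsN hy.1 hy.2)
    rw [hNdef, hDdef]
    exact this
  -- continuity
  have hΨcont : ContinuousOn Ψ (Set.Ico 0 1) :=
    ContinuousOn.congr (hNcont.div hDcont (fun z hz => (hDpos hz.1 hz.2).ne'))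
      (fun z hz => hΨeq z hz)
  -- maps to
  have hmaps : Set.MapsTo Ψ (Set.Ico 0 1) (Set.Ici 0) := by
    intro z hz
    rw [Set.mem_Ici, hΨeq z hz]
    exact div_nonneg (hNnonneg hz.1 hz.2) (hDpos hz.1 hz.2).le
  -- surjectivity
  have hΨ0 : Ψ 0 = 0 := by
    rw [hΨ 0 ⟨le_rfl, one_pos⟩, zero_mul, zero_div]
  have hsurj : Set.SurjOn Ψ (Set.Ico 0 1) (Set.Ici 0) := by
    intro t ht
    rw [Set.mem_Ici] at ht
    -- find b ∈ [0,1) with t ≤ Ψ b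
    set m : ℕ := 2 * ⌈t⌉₊ + 2 with hmdef
    set A : ℝ := ∑ j ∈ Finset.range m, a j with hAdef
    have hA1 : 1 ≤ A := by
      have h1 : a 0 ≤ A :=
        Finset.single_le_sum (fun j _ => (hapos j).le) (Finset.mem_range.2 (by omega))
      rw [ha0] at h1; exact h1
    have hA0 : 0 < A := lt_of_lt_of_le one_pos hA1
    set b : ℝ := 1 - (2*A)⁻¹ with hbdef
    have h2A : (2:ℝ) ≤ 2*A := by linarith
    have hinvpos : 0 < (2*A)⁻¹ := inv_pos.2 (by linarith)
    have hinvle : (2*A)⁻¹ ≤ 2⁻¹ := by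
      apply inv_anti₀ (by norm_num) h2A
    have hb0 : 0 ≤ b := by
      rw [hbdef]
      have : (2:ℝ)⁻¹ = 1/2 := by norm_num
      linarith [hinvle, this ▸ hinvle]
    have hb1 : b < 1 := by rw [hbdef]; linarith
    have hDb : 0 < D b := hDpos hb0 hb1
    have hDb_eq : D b = ∑' k : ℕ, a k * b^k := by rw [hDdef]
    have hNb_eq : N b = ∑' k : ℕ, ((k:ℝ) * a k) * b^k := by rw [hNdef]
    have hgeo : 2*A ≤ D b := by
      have h1 : ∑' k : ℕ, b^k ≤ ∑' k : ℕ, a k * b^k :=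
        Summable.tsum_le_tsum (fun k => le_mul_of_one_le_left (pow_nonneg hb0 k) (ha1 k))
          (summable_geometric_of_lt_one hb0 hb1) (hsD hb0 hb1)
      rw [tsum_geometric_of_lt_one hb0 hb1] at h1
      have h2 : 1 - b = (2*A)⁻¹ := by rw [hbdef]; ring
      rw [h2, inv_inv] at h1
      rw [hDb_eq]
      exact h1
    have hsplitD : (∑ i ∈ Finset.range m, a i * b^i) + ∑' i : ℕ, a (i+m) * b^(i+m)
        = ∑' i : ℕ, a i * b^i := Summable.sum_add_tsum_nat_add m (hsD hb0 hb1)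
    have hsplitN : (∑ i ∈ Finset.range m, ((i:ℝ) * a i) * b^i)
        + ∑' i : ℕ, (((i+m:ℕ):ℝ) * a (i+m)) * b^(i+m)
        = ∑' i : ℕ, ((i:ℝ) * a i) * b^i := Summable.sum_add_tsum_nat_add m (hsN hb0 hb1)
    have hshiftD : Summable (fun i : ℕ => a (i+m) * b^(i+m)) :=
      (summable_nat_add_iff m).2 (hsD hb0 hb1)
    have hshiftN : Summable (fun i : ℕ => (((i+m:ℕ):ℝ) * a (i+m)) * b^(i+m)) :=
      (summable_nat_add_iff m).2 (hsN hb0 hb1)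
    have htailsum : (m:ℝ) * (∑' i : ℕ, a (i+m) * b^(i+m))
        ≤ ∑' i : ℕ, (((i+m:ℕ):ℝ) * a (i+m)) * b^(i+m) := by
      rw [← tsum_mul_left]
      apply Summable.tsum_le_tsum ?_ (hshiftD.mul_left (m:ℝ)) hshiftN
      intro i
      have h1 : (m:ℝ) ≤ ((i+m:ℕ):ℝ) := by
        have := Nat.le_add_left m i
        exact_mod_cast this
      have h2 := mul_le_mul_of_nonneg_right h1
        (mul_nonneg (hapos (i+m)).le (pow_nonneg hb0 (i+m)))
      nlinarith [h2]
    have hheadD : ∑ i ∈ Finset.range m, a i * b^i ≤ A := by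
      rw [hAdef]
      apply Finset.sum_le_sum
      intro i _
      exact mul_le_of_le_one_right (hapos i).le (pow_le_one₀ hb0 hb1.le)
    have hheadN : (0:ℝ) ≤ ∑ i ∈ Finset.range m, ((i:ℝ) * a i) * b^i :=
      Finset.sum_nonneg fun i _ => mul_nonneg
        (mul_nonneg (Nat.cast_nonneg i) (hapos i).le) (pow_nonneg hb0 i)
    have e4 : (m:ℝ) * (D b - A) ≤ (m:ℝ) * (D b - ∑ i ∈ Finset.range m, a i * b^i) :=
      mul_le_mul_of_nonneg_left (by linarith [hheadD]) (Nat.cast_nonneg m)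
    have e5 : D b - ∑ i ∈ Finset.range m, a i * b^i = ∑' i : ℕ, a (i+m) * b^(i+m) := by
      rw [hDb_eq, ← hsplitD]; ring
    have e6 : N b - ∑ i ∈ Finset.range m, ((i:ℝ) * a i) * b^i
        = ∑' i : ℕ, (((i+m:ℕ):ℝ) * a (i+m)) * b^(i+m) := by
      rw [hNb_eq, ← hsplitN]; ring
    have c1 : (m:ℝ) * (D b - A) ≤ N b := by
      rw [e5] at e4
      linarith [htailsum, e6 ▸ htailsum]
    have hceil : t ≤ (⌈t⌉₊:ℝ) := Nat.le_ceil t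
    have hm : (m:ℝ) = 2*(⌈t⌉₊:ℝ) + 2 := by rw [hmdef]; push_cast; ring
    have P1 : (m:ℝ) * A ≤ (m:ℝ) * (D b / 2) :=
      mul_le_mul_of_nonneg_left (by linarith) (Nat.cast_nonneg m)
    have P2 : t * D b ≤ ((m:ℝ)/2) * D b :=
      mul_le_mul_of_nonneg_right (by linarith) hDb.le
    have htb : t ≤ Ψ b := by
      rw [hΨeq b ⟨hb0, hb1⟩, le_div_iff₀ hDb]
      nlinarith [P1, P2, c1]
    have hsub : Set.Icc (0:ℝ) b ⊆ Set.Ico 0 1 := fun w hw =>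
      ⟨hw.1, lt_of_le_of_lt hw.2 hb1⟩
    have hival := intermediate_value_Icc hb0 (hΨcont.mono hsub)
    have htmem : t ∈ Set.Icc (Ψ 0) (Ψ b) := ⟨by rw [hΨ0]; exact ht, htb⟩
    obtain ⟨w, hw, hwt⟩ := hival htmem
    exact ⟨w, hsub hw, hwt⟩
  exact ⟨hmono, hΨcont, hmaps, hmono.injOn, hsurj⟩
end

section
/- Let Ψ⁻¹ : [0,∞) → [0,1) be a continuous increasing function (the inverse of an increasing bijection Ψ : [0,1) → [0,∞)), let u₁ ≥ u₂ ≥ ⋯ ≥ 0 satisfy ∑_k u_k ≤ ρ. Then any two measurable functions f, g : ℝ₊ → ℝ₊ satisfying f(t) = ∫₀ᵗ (1 − Ψ⁻¹(ρ − ∑_{k=1}^∞ [u_k − f(s)]₊)) ds for all t ≥ 0 (and likewise for g) are equal. Here [a]₊ = max(a,0), and Ψ⁻¹ is assumed continuously differentiable on [0, ρ]. -/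
/-!
The right-hand side is `∫₀ᵗ F (f s) ds` with `F x = 1 - Ψ⁻¹(ρ - ∑ₖ [uₖ - x]₊)`, and `F` is
antitone on `[0, ∞)`. For such an equation a larger solution grows more slowly: if `f t > g t`,
let `t₀` be the last time in `[0, t]` with `f ≤ g`; on `(t₀, t]` we have `F ∘ f ≤ F ∘ g`, so
`f t - g t ≤ f t₀ - g t₀ ≤ 0`. Exchanging `f` and `g` gives uniqueness.
-/

open MeasureTheory Set

theorem ContinuousOn.nonpos_of_le_of_pos_on_Ioc {D : ℝ → ℝ} {a b : ℝ} (hab : a ≤ b)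
    (hD : ContinuousOn D (Icc a b)) (ha : D a ≤ 0)
    (hstep : ∀ c ∈ Icc a b, (∀ r ∈ Ioc c b, 0 < D r) → D b ≤ D c) :
    D b ≤ 0 := by
  set C := Icc a b ∩ D ⁻¹' Iic 0
  have hC : IsCompact C := isCompact_Icc.of_isClosed_subset
    (hD.preimage_isClosed_of_isClosed isClosed_Icc isClosed_Iic) inter_subset_left
  have haC : a ∈ C := ⟨left_mem_Icc.2 hab, ha⟩
  have hmem : sSup C ∈ C := hC.sSup_mem ⟨a, haC⟩
  have hpos : ∀ r ∈ Ioc (sSup C) b, 0 < D r := fun r hr => by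
    by_contra! hr'
    have hrC : r ∈ C := ⟨⟨hmem.1.1.trans hr.1.le, hr.2⟩, hr'⟩
    exact (le_csSup hC.bddAbove hrC).not_gt hr.1
  exact (hstep _ hmem.1 hpos).trans hmem.2

theorem le_of_eq_integral_of_antitoneOn {F : ℝ → ℝ} {s : Set ℝ} (hF : AntitoneOn F s)
    {f g : ℝ → ℝ} (hfs : ∀ t, f t ∈ s) (hgs : ∀ t, g t ∈ s)
    (hfi : ∀ a b, IntervalIntegrable (fun r => F (f r)) volume a b)
    (hgi : ∀ a b, IntervalIntegrable (fun r => F (g r)) volume a b)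
    (hf : ∀ t ≥ (0 : ℝ), f t = ∫ r in (0 : ℝ)..t, F (f r))
    (hg : ∀ t ≥ (0 : ℝ), g t = ∫ r in (0 : ℝ)..t, F (g r)) {t : ℝ} (ht : 0 ≤ t) :
    f t ≤ g t := by
  have hcont : ContinuousOn (fun r => f r - g r) (Icc 0 t) :=
    ((intervalIntegral.continuous_primitive hfi 0).sub
      (intervalIntegral.continuous_primitive hgi 0)).continuousOn.congr
      fun r hr => by simp only [hf r hr.1, hg r hr.1, Pi.sub_apply]
  have h0 : f 0 - g 0 ≤ 0 := by simp [hf 0 le_rfl, hg 0 le_rfl]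
  suffices f t - g t ≤ 0 by linarith
  refine hcont.nonpos_of_le_of_pos_on_Ioc (D := fun r => f r - g r) ht h0 fun c hc hpos => ?_
  have hf_incr : f t - f c = ∫ r in c..t, F (f r) := by
    rw [hf t ht, hf c hc.1, intervalIntegral.integral_interval_sub_left (hfi 0 t) (hfi 0 c)]
  have hg_incr : g t - g c = ∫ r in c..t, F (g r) := by
    rw [hg t ht, hg c hc.1, intervalIntegral.integral_interval_sub_left (hgi 0 t) (hgi 0 c)]
  have hslower : ∫ r in c..t, F (f r) ≤ ∫ r in c..t, F (g r) :=
    intervalIntegral.integral_mono_on_of_le_Ioo hc.2 (hfi c t) (hgi c t) fun r hr =>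
      hF (hgs r) (hfs r) (sub_pos.1 (hpos r ⟨hr.1, hr.2.le⟩)).le
  linarith

theorem eq_of_eq_integral_of_antitoneOn {F : ℝ → ℝ} {s : Set ℝ} (hF : AntitoneOn F s)
    {f g : ℝ → ℝ} (hfs : ∀ t, f t ∈ s) (hgs : ∀ t, g t ∈ s)
    (hfi : ∀ a b, IntervalIntegrable (fun r => F (f r)) volume a b)
    (hgi : ∀ a b, IntervalIntegrable (fun r => F (g r)) volume a b)
    (hf : ∀ t ≥ (0 : ℝ), f t = ∫ r in (0 : ℝ)..t, F (f r))
    (hg : ∀ t ≥ (0 : ℝ), g t = ∫ r in (0 : ℝ)..t, F (g r)) {t : ℝ} (ht : 0 ≤ t) :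
    f t = g t :=
  le_antisymm (le_of_eq_integral_of_antitoneOn hF hfs hgs hfi hgi hf hg ht)
    (le_of_eq_integral_of_antitoneOn hF hgs hfs hgi hfi hg hf ht)

theorem AntitoneOn.intervalIntegrable_comp {F : ℝ → ℝ} {c C : ℝ} (hF : AntitoneOn F (Ici c))
    (hFC : ∀ x ≥ c, |F x| ≤ C) {f : ℝ → ℝ} (hfm : Measurable f) (hfc : ∀ t, c ≤ f t)
    (a b : ℝ) : IntervalIntegrable (fun t => F (f t)) volume a b := by
  have hclamp : Antitone fun x => F (max x c) := fun x y hxy =>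
    hF (le_max_right x c) (le_max_right y c) (max_le_max_right c hxy)
  have hcomp : (fun t => F (f t)) = fun t => F (max (f t) c) := by
    simp only [max_eq_left (hfc _)]
  rw [hcomp]
  refine (intervalIntegrable_const (c := C)).mono_fun'
    (hclamp.measurable.comp hfm).aestronglyMeasurable (ae_of_all _ fun t => ?_)
  simpa only [Real.norm_eq_abs] using hFC _ (le_max_right _ _)

section PositivePart

variable {ι : Type*} {v : ι → ℝ}

theorem max_sub_le_self {x y : ℝ} (hx : 0 ≤ x) (hy : 0 ≤ y) : max (y - x) 0 ≤ y :=
  max_le (by linarith) hy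

theorem summable_max_sub (hv : ∀ i, 0 ≤ v i) (hs : Summable v) {x : ℝ} (hx : 0 ≤ x) :
    Summable fun i => max (v i - x) 0 :=
  hs.of_nonneg_of_le (fun _ => le_max_right _ _) fun i => max_sub_le_self hx (hv i)

theorem tsum_max_sub_le (hv : ∀ i, 0 ≤ v i) (hs : Summable v) {x : ℝ} (hx : 0 ≤ x) :
    ∑' i, max (v i - x) 0 ≤ ∑' i, v i :=
  (summable_max_sub hv hs hx).tsum_le_tsum (fun i => max_sub_le_self hx (hv i)) hs

theorem antitoneOn_tsum_max_sub (hv : ∀ i, 0 ≤ v i) (hs : Summable v) :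
    AntitoneOn (fun x => ∑' i, max (v i - x) 0) (Ici 0) := fun _ hx _ hy hxy =>
  (summable_max_sub hv hs hy).tsum_le_tsum
    (fun _ => max_le_max_right 0 (sub_le_sub_left hxy _)) (summable_max_sub hv hs hx)

end PositivePart

/-- `ψ` plays the role of `Ψ⁻¹`. -/
theorem stmt10_general (ρ : ℝ) (ψ : ℝ → ℝ)
    (hψ_mono : StrictMonoOn ψ (Set.Ici 0))
    (hψ_range : ∀ s ≥ (0 : ℝ), ψ s ∈ Set.Ico (0 : ℝ) 1)
    (u : ℕ → ℝ) (hu0 : ∀ k, 1 ≤ k → 0 ≤ u k)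
    (husum : Summable fun k : ℕ => u (k + 1))
    (hle : ∑' k : ℕ, u (k + 1) ≤ ρ)
    (f g : ℝ → ℝ) (hfm : Measurable f) (hgm : Measurable g)
    (hf0 : ∀ t, 0 ≤ f t) (hg0 : ∀ t, 0 ≤ g t)
    (hf : ∀ t ≥ (0 : ℝ),
      f t = ∫ s in (0 : ℝ)..t, (1 - ψ (ρ - ∑' k : ℕ, max (u (k + 1) - f s) 0)))
    (hg : ∀ t ≥ (0 : ℝ),
      g t = ∫ s in (0 : ℝ)..t, (1 - ψ (ρ - ∑' k : ℕ, max (u (k + 1) - g s) 0))) :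
    ∀ t ≥ (0 : ℝ), f t = g t := by
  have hu : ∀ k, 0 ≤ u (k + 1) := fun k => hu0 (k + 1) k.succ_pos
  have harg : ∀ x ≥ (0 : ℝ), 0 ≤ ρ - ∑' k : ℕ, max (u (k + 1) - x) 0 := fun x hx => by
    linarith [tsum_max_sub_le hu husum hx]
  set F : ℝ → ℝ := fun x => 1 - ψ (ρ - ∑' k : ℕ, max (u (k + 1) - x) 0)
  have hF : AntitoneOn F (Ici 0) := fun x hx y hy hxy =>
    sub_le_sub_left (hψ_mono.monotoneOn (harg x hx) (harg y hy)
      (sub_le_sub_left (antitoneOn_tsum_max_sub hu husum hx hy hxy) ρ)) 1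
  have hFC : ∀ x ≥ (0 : ℝ), |F x| ≤ 1 := fun x hx => by
    obtain ⟨hψ0, hψ1⟩ := hψ_range _ (harg x hx)
    exact abs_le.2 ⟨by linarith, by linarith⟩
  exact fun t ht => eq_of_eq_integral_of_antitoneOn hF hf0 hg0
    (hF.intervalIntegrable_comp hFC hfm hf0) (hF.intervalIntegrable_comp hFC hgm hg0) hf hg ht

/-- Uniqueness of the solution to the hydrodynamic integral equation.
`ψ` plays the role of `Ψ⁻¹`. -/
theorem stmt10 (ρ : ℝ) (hρ : 0 ≤ ρ) (ψ : ℝ → ℝ)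
    (hψ_mono : StrictMonoOn ψ (Set.Ici 0))
    (hψ_range : ∀ s ≥ (0 : ℝ), ψ s ∈ Set.Ico (0 : ℝ) 1)
    (hψ_cd : ContDiffOn ℝ 1 ψ (Set.Icc 0 ρ))
    (u : ℕ → ℝ) (hu0 : ∀ k, 1 ≤ k → 0 ≤ u k)
    (humono : ∀ k, 1 ≤ k → u (k + 1) ≤ u k)
    (husum : Summable fun k : ℕ => u (k + 1))
    (hle : ∑' k : ℕ, u (k + 1) ≤ ρ)
    (f g : ℝ → ℝ) (hfm : Measurable f) (hgm : Measurable g)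
    (hf0 : ∀ t, 0 ≤ f t) (hg0 : ∀ t, 0 ≤ g t)
    (hf : ∀ t ≥ (0 : ℝ),
      f t = ∫ s in (0 : ℝ)..t, (1 - ψ (ρ - ∑' k : ℕ, max (u (k + 1) - f s) 0)))
    (hg : ∀ t ≥ (0 : ℝ),
      g t = ∫ s in (0 : ℝ)..t, (1 - ψ (ρ - ∑' k : ℕ, max (u (k + 1) - g s) 0))) :
    ∀ t ≥ (0 : ℝ), f t = g t :=
  stmt10_general ρ ψ hψ_mono hψ_range u hu0 husum hle f g hfm hgm hf0 hg0 hf hg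
end

section
/- Let ψ : [0,ρ] → [0,1) be continuous and increasing (playing the role of Ψ⁻¹), let u₁ ≥ u₂ ≥ ⋯ ≥ 0 with ∑_k u_k ≤ ρ, and ρ_k = ρ + k u_{k+1} − ∑_{i=1}^k u_i. Then for every i ≥ 1, ∑_{k=i}^∞ (1/k) ∫_{ρ_k}^{ρ_{k−1}} ds/(1 − ψ(s)) ≤ ∫₀^ρ ds/(1 − ψ(s)), with equality when u₁ = ρ and u_k = 0 for all k ≥ 2 and i = 1. -/
/-!
The sequence `ρ_k` is non-increasing with `ρ_0 = ρ` and `ρ_k ≥ 0`, so the intervals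
`[ρ_k, ρ_{k-1}]`, `k ≥ i`, are consecutive subintervals of `[0, ρ]`. The integrand
`1 / (1 - ψ)` is non-negative there and the weights `1 / k` are at most `1`, so every partial
sum is bounded by the telescoped integral over `[ρ_N, ρ_{i-1}] ⊆ [0, ρ]`. When `u = (ρ, 0, 0, …)`
we have `ρ_k = 0` for `k ≥ 1`, and only the first term, `∫ over [0, ρ]`, survives.
-/

open Set MeasureTheory intervalIntegral

theorem tsum_mul_integral_le_of_antitone {f : ℝ → ℝ} {a b : ℝ} {r c : ℕ → ℝ}
    (hf : IntegrableOn f (Icc a b)) (hf₀ : ∀ s ∈ Icc a b, 0 ≤ f s)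
    (hr : Antitone r) (hrab : ∀ n, r n ∈ Icc a b) (hc₀ : ∀ n, 0 ≤ c n) (hc₁ : ∀ n, c n ≤ 1) :
    ∑' n, c n * ∫ s in r (n + 1)..r n, f s ≤ ∫ s in a..b, f s := by
  have hint : ∀ x ∈ Icc a b, ∀ y ∈ Icc a b, IntervalIntegrable f volume x y :=
    fun x hx y hy => (hf.mono_set (uIcc_subset_Icc hx hy)).intervalIntegrable
  have hI₀ : ∀ n, 0 ≤ ∫ s in r (n + 1)..r n, f s := fun n =>
    integral_nonneg (hr n.le_succ) fun s hs =>
      hf₀ s ⟨(hrab _).1.trans hs.1, hs.2.trans (hrab _).2⟩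
  have htelescope : ∀ N, ∑ n ∈ Finset.range N, ∫ s in r (n + 1)..r n, f s
      = ∫ s in r N..r 0, f s := fun N => by
    rw [← neg_neg (∫ s in r N..r 0, f s), ← integral_symm,
      ← sum_integral_adjacent_intervals fun k _ => hint _ (hrab k) _ (hrab _),
      ← Finset.sum_neg_distrib]
    exact Finset.sum_congr rfl fun n _ => integral_symm _ _
  have hab : a ≤ b := (hrab 0).1.trans (hrab 0).2
  refine Real.tsum_le_of_sum_range_le (fun n => mul_nonneg (hc₀ n) (hI₀ n)) fun N => ?_
  calc ∑ n ∈ Finset.range N, c n * ∫ s in r (n + 1)..r n, f s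
      ≤ ∑ n ∈ Finset.range N, ∫ s in r (n + 1)..r n, f s :=
        Finset.sum_le_sum fun n _ => mul_le_of_le_one_left (hI₀ n) (hc₁ n)
    _ = ∫ s in r N..r 0, f s := htelescope N
    _ ≤ ∫ s in a..b, f s :=
        integral_mono_interval (hrab N).1 (hr N.zero_le) (hrab 0).2
          (ae_restrict_of_forall_mem measurableSet_Ioc fun s hs => hf₀ s ⟨hs.1.le, hs.2⟩)
          (hint a ⟨le_rfl, hab⟩ b ⟨hab, le_rfl⟩)

def radiusSeq (ρ : ℝ) (u : ℕ → ℝ) (k : ℕ) : ℝ := ρ + k * u (k + 1) - ∑ i ∈ Finset.Icc 1 k, u i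

section radiusSeq

variable {ρ : ℝ} {u : ℕ → ℝ}

theorem radiusSeq_zero : radiusSeq ρ u 0 = ρ := by simp [radiusSeq]

theorem radiusSeq_antitone (humono : ∀ k, 1 ≤ k → u (k + 1) ≤ u k) :
    Antitone (radiusSeq ρ u) := by
  refine antitone_nat_of_succ_le fun k => ?_
  have h := humono (k + 1) k.succ_pos
  simp only [radiusSeq, Finset.sum_Icc_succ_top (Nat.le_add_left 1 k), Nat.cast_succ]
  nlinarith [k.cast_nonneg (α := ℝ)]

theorem sum_Icc_le_of_tsum_le (hu0 : ∀ k, 1 ≤ k → 0 ≤ u k) (husum : Summable fun k => u (k + 1))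
    (hle : ∑' k, u (k + 1) ≤ ρ) (k : ℕ) : ∑ i ∈ Finset.Icc 1 k, u i ≤ ρ := by
  have hshift : ∑ i ∈ Finset.range k, u (i + 1) = ∑ i ∈ Finset.Icc 1 k, u i := by
    rw [Finset.range_eq_Ico, Finset.sum_Ico_add' u]; rfl
  rw [← hshift]
  exact (husum.sum_le_tsum _ fun i _ => hu0 (i + 1) i.succ_pos).trans hle

theorem radiusSeq_mem_Icc (hu0 : ∀ k, 1 ≤ k → 0 ≤ u k) (humono : ∀ k, 1 ≤ k → u (k + 1) ≤ u k)
    (husum : Summable fun k => u (k + 1)) (hle : ∑' k, u (k + 1) ≤ ρ) (k : ℕ) :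
    radiusSeq ρ u k ∈ Icc 0 ρ := by
  refine ⟨?_, (radiusSeq_antitone humono k.zero_le).trans_eq radiusSeq_zero⟩
  have := sum_Icc_le_of_tsum_le hu0 husum hle k
  have := mul_nonneg k.cast_nonneg (hu0 (k + 1) k.succ_pos)
  unfold radiusSeq
  linarith

theorem radiusSeq_eq_zero_of_single (hu1 : u 1 = ρ) (hu2 : ∀ k, 2 ≤ k → u k = 0) {k : ℕ}
    (hk : 1 ≤ k) : radiusSeq ρ u k = 0 := by
  have hsum : ∑ i ∈ Finset.Icc 1 k, u i = ρ := by
    rw [Finset.sum_eq_single_of_mem 1 (Finset.mem_Icc.2 ⟨le_rfl, hk⟩), hu1]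
    intro i hi hi1
    exact hu2 i (by grind)
  simp [radiusSeq, hsum, hu2 (k + 1) (by omega)]

end radiusSeq

/-- The sum over `k ≥ i` is written as a sum over `j : ℕ` of the terms of index `k = i + j`. -/
theorem stmt13_general (ρ : ℝ) (ψ : ℝ → ℝ)
    (hψc : ContinuousOn ψ (Set.Icc 0 ρ))
    (hψr : ∀ s ∈ Set.Icc (0 : ℝ) ρ, ψ s ∈ Set.Ico (0 : ℝ) 1)
    (u : ℕ → ℝ) (hu0 : ∀ k, 1 ≤ k → 0 ≤ u k)
    (humono : ∀ k, 1 ≤ k → u (k + 1) ≤ u k)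
    (husum : Summable fun k : ℕ => u (k + 1))
    (hle : ∑' k : ℕ, u (k + 1) ≤ ρ)
    (ρk : ℕ → ℝ)
    (hρk : ∀ k, ρk k = ρ + k * u (k + 1) - ∑ i ∈ Finset.Icc 1 k, u i) :
    (∀ i : ℕ, 1 ≤ i →
      ∑' j : ℕ, (1 / ((i + j : ℕ) : ℝ)) *
          ∫ s in ρk (i + j)..ρk (i + j - 1), 1 / (1 - ψ s)
        ≤ ∫ s in (0 : ℝ)..ρ, 1 / (1 - ψ s)) ∧
    ((u 1 = ρ ∧ ∀ k, 2 ≤ k → u k = 0) →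
      ∑' j : ℕ, (1 / ((1 + j : ℕ) : ℝ)) *
          ∫ s in ρk (1 + j)..ρk (1 + j - 1), 1 / (1 - ψ s)
        = ∫ s in (0 : ℝ)..ρ, 1 / (1 - ψ s)) := by
  obtain rfl : ρk = radiusSeq ρ u := funext hρk
  have hψ1 : ∀ s ∈ Icc 0 ρ, 0 < 1 - ψ s := fun s hs => sub_pos.2 (hψr s hs).2
  have hint : IntegrableOn (fun s => 1 / (1 - ψ s)) (Icc 0 ρ) :=
    (continuousOn_const.div (continuousOn_const.sub hψc) fun s hs =>
      (hψ1 s hs).ne').integrableOn_Icc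
  refine ⟨fun i hi => ?_, fun ⟨hu1, hu2⟩ => ?_⟩
  · obtain ⟨m, rfl⟩ : ∃ m, i = m + 1 := ⟨i - 1, by omega⟩
    convert tsum_mul_integral_le_of_antitone hint (fun s hs => (one_div_pos.2 (hψ1 s hs)).le)
      ((radiusSeq_antitone humono).comp_monotone (fun _ _ h => Nat.add_le_add_left h m))
      (fun n => radiusSeq_mem_Icc hu0 humono husum hle (m + n))
      (c := fun j => 1 / ((m + 1 + j : ℕ) : ℝ)) (fun j => by positivity)
      (fun j => div_le_one_of_le₀ (by norm_cast; omega) (by positivity)) using 4 with j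
    rw [show m + 1 + j - 1 = m + j by omega, add_right_comm]
    rfl
  · have hρk₁ {k : ℕ} (hk : 1 ≤ k) := radiusSeq_eq_zero_of_single hu1 hu2 hk
    rw [tsum_eq_single 0 fun j hj => ?_]
    · simp [hρk₁ le_rfl, radiusSeq_zero]
    · rw [hρk₁ (by omega : 1 ≤ 1 + j), hρk₁ (by omega : 1 ≤ 1 + j - 1), integral_same, mul_zero]

/-- `ψ` plays the role of `Ψ⁻¹`. The sum over `k ≥ i` is written as a sum over
`j : ℕ` of the terms of index `k = i + j`. -/
theorem stmt13 (ρ : ℝ) (hρ : 0 < ρ) (ψ : ℝ → ℝ)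
    (hψc : ContinuousOn ψ (Set.Icc 0 ρ))
    (hψm : StrictMonoOn ψ (Set.Icc 0 ρ))
    (hψr : ∀ s ∈ Set.Icc (0 : ℝ) ρ, ψ s ∈ Set.Ico (0 : ℝ) 1)
    (u : ℕ → ℝ) (hu0 : ∀ k, 1 ≤ k → 0 ≤ u k)
    (humono : ∀ k, 1 ≤ k → u (k + 1) ≤ u k)
    (husum : Summable fun k : ℕ => u (k + 1))
    (hle : ∑' k : ℕ, u (k + 1) ≤ ρ)
    (ρk : ℕ → ℝ)
    (hρk : ∀ k, ρk k = ρ + k * u (k + 1) - ∑ i ∈ Finset.Icc 1 k, u i) :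
    (∀ i : ℕ, 1 ≤ i →
      ∑' j : ℕ, (1 / ((i + j : ℕ) : ℝ)) *
          ∫ s in ρk (i + j)..ρk (i + j - 1), 1 / (1 - ψ s)
        ≤ ∫ s in (0 : ℝ)..ρ, 1 / (1 - ψ s)) ∧
    ((u 1 = ρ ∧ ∀ k, 2 ≤ k → u k = 0) →
      ∑' j : ℕ, (1 / ((1 + j : ℕ) : ℝ)) *
          ∫ s in ρk (1 + j)..ρk (1 + j - 1), 1 / (1 - ψ s)
        = ∫ s in (0 : ℝ)..ρ, 1 / (1 - ψ s)) :=
  stmt13_general ρ ψ hψc hψr u hu0 humono husum hle ρk hρk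
end

section
/- For any real λ ≥ k ≥ 0 with k an integer, a Poisson random variable N with mean λ satisfies P(N ≥ k) > 1/2. -/
/-!
For `j < k ≤ λ` the Poisson weights satisfy `P(N = k-1-j) ≤ P(N = k+j)`: their ratio is
`λ^(2j+1) (k-1-j)! / (k+j)!`, and the `2j+1` factors of `(k+j)!/(k-1-j)!` pair off symmetrically
about `k`, each pair having product at most `k² ≤ λ²`. Summing over `j < k` gives
`P(N < k) ≤ P(k ≤ N < 2k) < P(N ≥ k)`, so `P(N ≥ k) > 1/2`.
-/

open ProbabilityTheory Finset
open scoped Nat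

theorem Nat.factorial_add_two_mul_add_one_le (m j : ℕ) :
    (m + 2 * j + 1)! ≤ (m + j + 1) ^ (2 * j + 1) * m ! := by
  induction j generalizing m with
  | zero => simp [Nat.factorial_succ]
  | succ j ih =>
    have hpair : (m + 2 * j + 3) * (m + 1) ≤ (m + j + 2) ^ 2 := by nlinarith
    calc (m + 2 * (j + 1) + 1)! = (m + 2 * j + 3) * (m + 1 + 2 * j + 1)! := by
          rw [show m + 2 * (j + 1) + 1 = (m + 1 + 2 * j + 1) + 1 by ring, Nat.factorial_succ]; ring
      _ ≤ (m + 2 * j + 3) * ((m + j + 2) ^ (2 * j + 1) * (m + 1)!) := by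
          rw [show m + j + 2 = m + 1 + j + 1 by ring]
          exact Nat.mul_le_mul_left _ (ih (m + 1))
      _ = ((m + 2 * j + 3) * (m + 1)) * ((m + j + 2) ^ (2 * j + 1) * m !) := by
          rw [Nat.factorial_succ]; ring
      _ ≤ (m + j + 2) ^ 2 * ((m + j + 2) ^ (2 * j + 1) * m !) := Nat.mul_le_mul_right _ hpair
      _ = (m + (j + 1) + 1) ^ (2 * (j + 1) + 1) * m ! := by ring

set_option linter.deprecated false in
theorem poissonPMFReal_le_add_two_mul_add_one (lam : NNReal) (m j : ℕ)
    (h : ((m + j + 1 : ℕ) : ℝ) ≤ lam) :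
    poissonPMFReal lam m ≤ poissonPMFReal lam (m + 2 * j + 1) := by
  have hfact : ((m + 2 * j + 1)! : ℝ) ≤ (lam : ℝ) ^ (2 * j + 1) * m ! :=
    calc ((m + 2 * j + 1)! : ℝ) ≤ ((m + j + 1 : ℕ) : ℝ) ^ (2 * j + 1) * m ! := by
          exact_mod_cast Nat.factorial_add_two_mul_add_one_le m j
      _ ≤ (lam : ℝ) ^ (2 * j + 1) * m ! := by gcongr
  unfold poissonPMFReal
  rw [div_le_div_iff₀ (by positivity) (by positivity)]
  calc Real.exp (-lam) * (lam : ℝ) ^ m * (m + 2 * j + 1)!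
      ≤ Real.exp (-lam) * (lam : ℝ) ^ m * ((lam : ℝ) ^ (2 * j + 1) * m !) := by gcongr
    _ = Real.exp (-lam) * (lam : ℝ) ^ (m + 2 * j + 1) * m ! := by ring

theorem half_lt_tsum_add_of_reflect_le {f : ℕ → ℝ} (hf : HasSum f 1) (hpos : ∀ n, 0 < f n)
    (k : ℕ) (hreflect : ∀ j < k, f (k - 1 - j) ≤ f (k + j)) :
    1 / 2 < ∑' n, f (k + n) := by
  have hs := hf.summable
  have hs_tail : Summable fun n ↦ f (n + k) := (summable_nat_add_iff k).2 hs
  have hsplit : ∑ i ∈ range k, f i + ∑' n, f (n + k) = 1 := by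
    rw [hs.sum_add_tsum_nat_add, hf.tsum_eq]
  have hsplit_tail : ∑ j ∈ range k, f (j + k) + ∑' n, f (n + k + k) = ∑' n, f (n + k) :=
    hs_tail.sum_add_tsum_nat_add k
  have hfar_pos : 0 < ∑' n, f (n + k + k) :=
    ((summable_nat_add_iff k).2 hs_tail).tsum_pos (fun n ↦ (hpos _).le) 0 (hpos _)
  have hhead : ∑ i ∈ range k, f i ≤ ∑ j ∈ range k, f (j + k) := by
    rw [← sum_range_reflect]
    exact sum_le_sum fun j hj ↦ (hreflect j (mem_range.1 hj)).trans_eq (by rw [add_comm])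
  simp_rw [add_comm k]
  linarith

set_option linter.deprecated false in
/-- If `N` is Poisson with mean `λ ≥ k`, then `P(N ≥ k) > 1/2`.
The tail `P(N ≥ k)` is written as `∑_{n ≥ 0} P(N = k + n)`. -/
theorem stmt18 (lam : NNReal) (hlam : 0 < lam) (k : ℕ) (hk : (k : ℝ) ≤ lam) :
    (1 : ℝ) / 2 < ∑' n : ℕ, poissonPMFReal lam (k + n) := by
  refine half_lt_tsum_add_of_reflect_le (hasSum_one_poissonMeasure lam)
    (fun n ↦ poissonPMFReal_pos hlam) k fun j hj ↦ ?_
  obtain ⟨m, rfl⟩ : ∃ m, k = m + j + 1 := ⟨k - 1 - j, by omega⟩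
  rw [show m + j + 1 - 1 - j = m by omega, show m + j + 1 + j = m + 2 * j + 1 by ring]
  exact poissonPMFReal_le_add_two_mul_add_one lam m j hk
end
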